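/- If f: S → ℂ satisfies f(xyz₀) + μ(y)f(xτ(y)z₀) = 2f(x)f(y) for all x,y ∈ S, then f(xz₀²) = f(x)f(z₀) for all x ∈ S. -/

import Mathlib

/-!
Comparing the equation at `(a, y)` and at `(a, τ y)`, for some `a` with `f a ≠ 0`, shows
`μ y * f (τ y) = f y`. With this symmetry the equation at `x = τ z₀` collapses, since its two
terms are `f u` and `μ u * f (τ u)` for `u = τ z₀ * y * z₀`, to
`f (τ z₀ * y * z₀) = f (τ z₀) * f y`. Substituting this into the equation at `y = z₀` leaves
exactly `f (x * z₀ * z₀) = f x * f z₀`.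
-/

namespace KannappanEquation

variable {S : Type*} {τ : S → S} {μ : S → ℂ} {z₀ : S} {f : S → ℂ}

theorem mul_apply_map [Mul S] (hτinv : ∀ x, τ (τ x) = x) (hμτ : ∀ x, μ x * μ (τ x) = 1)
    (hf : ∀ x y, f (x * y * z₀) + μ y * f (x * τ y * z₀) = 2 * f x * f y) (y : S) :
    μ y * f (τ y) = f y := by
  by_cases hzero : ∀ a, f a = 0
  · simp [hzero]
  push Not at hzero
  obtain ⟨a, ha⟩ := hzero
  have hy := hf a y
  have hτy := hf a (τ y)
  rw [hτinv] at hτy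
  have key : f a * (μ y * f (τ y) - f y) = 0 := by
    linear_combination (hy - μ y * hτy + f (a * y * z₀) * hμτ y) / 2
  exact sub_eq_zero.mp ((mul_eq_zero.mp key).resolve_left ha)

variable [Semigroup S]

theorem comm_map_of_comm (hτinv : ∀ x, τ (τ x) = x)
    (hτ : (∀ x y, τ (x * y) = τ x * τ y) ∨ (∀ x y, τ (x * y) = τ y * τ x))
    (hz₀ : ∀ x, z₀ * x = x * z₀) (x : S) : τ z₀ * x = x * τ z₀ := by
  rcases hτ with hom | anti
  · rw [← hτinv x, ← hom, hz₀, hom, hτinv]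
  · rw [← hτinv x, ← anti, ← hz₀, anti, hτinv]

theorem map_conj (hτinv : ∀ x, τ (τ x) = x)
    (hτ : (∀ x y, τ (x * y) = τ x * τ y) ∨ (∀ x y, τ (x * y) = τ y * τ x))
    (hz₀ : ∀ x, z₀ * x = x * z₀) (y : S) : τ (τ z₀ * y * z₀) = τ z₀ * τ y * z₀ := by
  have hτz₀ := comm_map_of_comm hτinv hτ hz₀
  rcases hτ with hom | anti
  · rw [hom, hom, hτinv, hz₀, hτz₀, mul_assoc, mul_assoc, hz₀]
  · rw [anti, anti, hτinv, mul_assoc]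

theorem apply_conj (hτinv : ∀ x, τ (τ x) = x)
    (hτ : (∀ x y, τ (x * y) = τ x * τ y) ∨ (∀ x y, τ (x * y) = τ y * τ x))
    (hμ : ∀ x y, μ (x * y) = μ x * μ y) (hμτ : ∀ x, μ x * μ (τ x) = 1)
    (hz₀ : ∀ x, z₀ * x = x * z₀)
    (hf : ∀ x y, f (x * y * z₀) + μ y * f (x * τ y * z₀) = 2 * f x * f y) (y : S) :
    f (τ z₀ * y * z₀) = f (τ z₀) * f y := by
  have hsymm := mul_apply_map hτinv hμτ hf (τ z₀ * y * z₀)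
  rw [map_conj hτinv hτ hz₀, hμ, hμ] at hsymm
  have h := hf (τ z₀) y
  linear_combination (h - hsymm + μ y * f (τ z₀ * τ y * z₀) * hμτ z₀) / 2

end KannappanEquation

open KannappanEquation in
theorem stmt_2 {S : Type*} [Semigroup S] (τ : S → S)
    (hτinv : ∀ x, τ (τ x) = x)
    (hτ : (∀ x y, τ (x * y) = τ x * τ y) ∨ (∀ x y, τ (x * y) = τ y * τ x))
    (μ : S → ℂ) (hμ : ∀ x y, μ (x * y) = μ x * μ y)
    (hμτ : ∀ x, μ (x * τ x) = 1)
    (z₀ : S) (hz₀ : ∀ x, z₀ * x = x * z₀)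
    (f : S → ℂ) (hf : ∀ x y, f (x * y * z₀) + μ y * f (x * τ y * z₀) = 2 * f x * f y) :
    ∀ x, f (x * (z₀ * z₀)) = f x * f z₀ := by
  have hμτ_mul : ∀ x, μ x * μ (τ x) = 1 := fun x => hμ x (τ x) ▸ hμτ x
  intro x
  have h := hf x z₀
  rw [← comm_map_of_comm hτinv hτ hz₀ x, apply_conj hτinv hτ hμ hμτ_mul hz₀ hf] at h
  have hsymm := mul_apply_map hτinv hμτ_mul hf z₀
  rw [← mul_assoc]
  linear_combination h - f x * hsymm
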